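/- Exact norm formula for the two-body stability operator at conjugate spectral parameters (Lemma A.1(vii), equation (1-M)): In the block model, for any constant τ > 0 and any z = E + iη with |z| ≤ τ^{−1} and η > 0, and for z₁ = conj(z₂) ∈ {z, z̄}, the D×D matrix M̂(z₁,z₂) with entries M̂(z₁,z₂)_{ab} = D⟨M(z₁)E_a M(z₂)E_b⟩ has nonnegative entries, its Perron–Frobenius eigenvalue equals Im m(z)/(Im m(z) + η) with eigenvector (1,…,1)ᵀ, and consequently ‖(I − M̂(z₁,z₂))^{−1}‖ = (Im m(z) + η)/η, where ‖·‖ is the operator norm on D×D matrices. -/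

import Mathlib

open Matrix Filter
open scoped Topology ENNReal NNReal BigOperators

noncomputable section

/-! ## Common definitions for the random block matrix model -/

/-- The Euclidean (ℓ²) norm of a complex vector. -/
def vecNorm {ι : Type*} [Fintype ι] (x : ι → ℂ) : ℝ :=
  Real.sqrt (∑ i, ‖x i‖ ^ 2)

/-- The Hilbert–Schmidt (Frobenius) norm of a complex matrix. -/
def hsNorm {ι κ : Type*} [Fintype ι] [Fintype κ] (B : Matrix ι κ ℂ) : ℝ :=
  Real.sqrt (∑ i, ∑ j, ‖B i j‖ ^ 2)

/-- The ℓ² → ℓ² operator norm of a complex matrix. -/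
def opNorm {ι κ : Type*} [Fintype ι] [Fintype κ] (B : Matrix ι κ ℂ) : ℝ :=
  ⨆ x : { x : κ → ℂ // vecNorm x ≤ 1 }, vecNorm (B.mulVec x.1)

/-- Entrywise ℓ² norm of a 3-tensor. -/
def l2norm3 {ι : Type*} [Fintype ι] (T : ι → ι → ι → ℂ) : ℝ :=
  Real.sqrt (∑ a, ∑ b, ∑ c, ‖T a b c‖ ^ 2)

/-- The normalized trace `⟨B⟩ = (card ι)⁻¹ Tr B`. -/
def ntrace {ι : Type*} [Fintype ι] (B : Matrix ι ι ℂ) : ℂ :=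
  (Fintype.card ι : ℂ)⁻¹ * B.trace

/-- The "imaginary part" `(B - B*) / (2i)` of a square complex matrix. -/
def matIm {ι : Type*} (B : Matrix ι ι ℂ) : Matrix ι ι ℂ :=
  (2 * Complex.I)⁻¹ • (B - Bᴴ)

/-- The `DN × DN` block-diagonal matrix with diagonal blocks `Hs 0, …, Hs (D-1)`. -/
def blockDiagOf (D N : ℕ) (Hs : Fin D → Matrix (Fin N) (Fin N) ℂ) :
    Matrix (Fin D × Fin N) (Fin D × Fin N) ℂ :=
  Matrix.of fun p q => if p.1 = q.1 then Hs p.1 p.2 q.2 else 0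

/-- The `DN × DN` Hermitian block matrix `Λ` coupling cyclically adjacent blocks by `A` and `A*`
(for `D = 2` the off-diagonal blocks are `A` and `A*`). -/
def coupling (D N : ℕ) (A : Matrix (Fin N) (Fin N) ℂ) :
    Matrix (Fin D × Fin N) (Fin D × Fin N) ℂ :=
  Matrix.of fun p q =>
    if (q.1 : ℕ) = (p.1 : ℕ) + 1 then A p.2 q.2
    else if (p.1 : ℕ) = (q.1 : ℕ) + 1 then Aᴴ p.2 q.2
    else if (p.1 : ℕ) = 0 ∧ (q.1 : ℕ) = D - 1 ∧ 2 < D then Aᴴ p.2 q.2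
    else if (q.1 : ℕ) = 0 ∧ (p.1 : ℕ) = D - 1 ∧ 2 < D then A p.2 q.2
    else 0

/-- The diagonal projection `E_a` onto the `a`-th block. -/
def blockProj (D N : ℕ) (a : Fin D) : Matrix (Fin D × Fin N) (Fin D × Fin N) ℂ :=
  Matrix.of fun p q => if p = q ∧ p.1 = a then 1 else 0

/-- `𝔯(k) = min (k, DN + 1 - k)`. -/
def frk (D N k : ℕ) : ℕ := min k (D * N + 1 - k)

/-- Index set for the independent entries (on or above the diagonal) of the `D` Wigner blocks. -/
abbrev WignerIndex (D N : ℕ) := Fin D × { p : Fin N × Fin N // (p.1 : ℕ) ≤ (p.2 : ℕ) }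

/-- The random block matrix model: for each `N`, `D` independent `N × N` complex Hermitian
Wigner matrices (entries independent up to Hermitian symmetry, i.i.d. real diagonal entries,
i.i.d. complex off-diagonal entries, mean zero, variance `1/N`, vanishing second moment
off the diagonal, `p`-th moments bounded by `C p * N^(-p/2)`), together with a deterministic
`N × N` coupling matrix `A` of operator norm at most `N^(-δA)`. -/
structure BlockModel (D : ℕ) (δA : ℝ) (C : ℕ → ℝ) where
  Ω : ℕ → Type
  [instMeas : ∀ N, MeasurableSpace (Ω N)]
  μ : ∀ N, MeasureTheory.Measure (Ω N)
  isProb : ∀ N, MeasureTheory.IsProbabilityMeasure (μ N)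
  A : ∀ N : ℕ, Matrix (Fin N) (Fin N) ℂ
  H : ∀ N : ℕ, Fin D → Ω N → Matrix (Fin N) (Fin N) ℂ
  meas_H : ∀ (N : ℕ) (a : Fin D) (i j : Fin N), Measurable fun ω => H N a ω i j
  herm : ∀ N a ω, (H N a ω).IsHermitian
  diag_real : ∀ N a ω i, (H N a ω i i).im = 0
  indep : ∀ N, ProbabilityTheory.iIndepFun
      (fun (idx : WignerIndex D N) ω => H N idx.1 ω idx.2.1.1 idx.2.1.2) (μ N)
  identDiag : ∀ (N : ℕ) (a b : Fin D) (i j : Fin N),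
      ProbabilityTheory.IdentDistrib (fun ω => H N a ω i i) (fun ω => H N b ω j j) (μ N) (μ N)
  identOff : ∀ (N : ℕ) (a b : Fin D) (i j i' j' : Fin N), (i : ℕ) < (j : ℕ) → (i' : ℕ) < (j' : ℕ) →
      ProbabilityTheory.IdentDistrib (fun ω => H N a ω i j) (fun ω => H N b ω i' j') (μ N) (μ N)
  mean_zero : ∀ (N : ℕ) (a : Fin D) (i j : Fin N), ∫ ω, H N a ω i j ∂(μ N) = 0
  var_entry : ∀ (N : ℕ), 0 < N → ∀ (a : Fin D) (i j : Fin N),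
      ∫ ω, ‖H N a ω i j‖ ^ 2 ∂(μ N) = 1 / (N : ℝ)
  offdiag_sq : ∀ (N : ℕ) (a : Fin D) (i j : Fin N), i ≠ j →
      ∫ ω, (H N a ω i j) ^ 2 ∂(μ N) = 0
  moment_bound : ∀ (p N : ℕ), 0 < N → ∀ (a : Fin D) (i j : Fin N),
      ∫ ω, ‖H N a ω i j‖ ^ p ∂(μ N) ≤ C p * (N : ℝ) ^ (-(p : ℝ) / 2)
  opA_bound : ∀ (N : ℕ), 0 < N → ∀ x : Fin N → ℂ,
      vecNorm ((A N).mulVec x) ≤ (N : ℝ) ^ (-δA) * vecNorm x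

attribute [instance] BlockModel.instMeas

namespace BlockModel

variable {D : ℕ} {δA : ℝ} {C : ℕ → ℝ}

/-- The uncoupled block-diagonal matrix `H`. -/
def Hbig (M : BlockModel D δA C) (N : ℕ) (ω : M.Ω N) :
    Matrix (Fin D × Fin N) (Fin D × Fin N) ℂ :=
  blockDiagOf D N fun a => M.H N a ω

/-- The coupling matrix `Λ`. -/
def Lam (M : BlockModel D δA C) (N : ℕ) : Matrix (Fin D × Fin N) (Fin D × Fin N) ℂ :=
  coupling D N (M.A N)

/-- The coupled matrix `H_Λ = H + Λ`. -/
def HLam (M : BlockModel D δA C) (N : ℕ) (ω : M.Ω N) :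
    Matrix (Fin D × Fin N) (Fin D × Fin N) ℂ :=
  M.Hbig N ω + M.Lam N

end BlockModel

/-- `ev 1 ≥ ev 2 ≥ ⋯ ≥ ev n` together with `v 1, …, v n` is a (complete, orthonormal,
decreasingly ordered) eigensystem of the Hermitian matrix `B`. -/
structure IsEigenSystem {ι : Type*} [Fintype ι] (B : Matrix ι ι ℂ) (n : ℕ)
    (ev : ℕ → ℝ) (v : ℕ → ι → ℂ) : Prop where
  antitone : ∀ k l, 1 ≤ k → k ≤ l → l ≤ n → ev l ≤ ev k
  eigen : ∀ k, 1 ≤ k → k ≤ n → B.mulVec (v k) = (ev k : ℂ) • v k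
  orthonormal : ∀ k l, 1 ≤ k → k ≤ n → 1 ≤ l → l ≤ n →
      star (v k) ⬝ᵥ v l = if k = l then 1 else 0

/-- `m` is the self-consistent Stieltjes transform associated with the deterministic matrix `L`:
the unique solution of `m(z) = ⟨(L - z - m(z))⁻¹⟩` with `Im m(z) > 0` on the upper half plane,
extended by conjugation symmetry. -/
structure IsSelfConsistent {ι : Type*} [Fintype ι] [DecidableEq ι]
    (L : Matrix ι ι ℂ) (m : ℂ → ℂ) : Prop where
  im_pos : ∀ z : ℂ, 0 < z.im → 0 < (m z).im
  eqn : ∀ z : ℂ, 0 < z.im →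
      m z = ntrace (L - z • (1 : Matrix ι ι ℂ) - m z • (1 : Matrix ι ι ℂ))⁻¹
  conj_symm : ∀ z : ℂ, m ((starRingEnd ℂ) z) = (starRingEnd ℂ) (m z)

/-- The deterministic approximation `M(z) = (L - z - m(z))⁻¹` of the resolv. -/
def Mdet {ι : Type*} [Fintype ι] [DecidableEq ι] (L : Matrix ι ι ℂ) (m : ℂ → ℂ) (z : ℂ) :
    Matrix ι ι ℂ :=
  (L - z • (1 : Matrix ι ι ℂ) - m z • (1 : Matrix ι ι ℂ))⁻¹

/-- The resolv `G(z) = (B - z)⁻¹`. -/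
def resolv {ι : Type*} [Fintype ι] [DecidableEq ι] (B : Matrix ι ι ℂ) (z : ℂ) :
    Matrix ι ι ℂ :=
  (B - z • (1 : Matrix ι ι ℂ))⁻¹

/-- `ρ` is the boundary density `ρ(x) = π⁻¹ lim_{η ↓ 0} Im m(x + iη)` of `m`. -/
def IsDensityOf (m : ℂ → ℂ) (ρ : ℝ → ℝ) : Prop :=
  ∀ x : ℝ, Tendsto (fun η : ℝ => (m ((x : ℂ) + (η : ℂ) * Complex.I)).im / Real.pi)
    (𝓝[>] 0) (𝓝 (ρ x))

/-- The `k`-th quantile `γ_k = sup {x : ∫_x^∞ ρ ≥ (k - 1/2) / total}`. -/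
def quantile (ρ : ℝ → ℝ) (total k : ℕ) : ℝ :=
  sSup {x : ℝ | ((k : ℝ) - 1 / 2) / (total : ℝ) ≤ ∫ E in Set.Ici x, ρ E}

/-- The semicircle density `ρ_sc(x) = (2π)⁻¹ √(4 - x²) 1_{[-2,2]}(x)`. -/
def semicircleDensity (x : ℝ) : ℝ :=
  Real.sqrt (4 - x ^ 2) / (2 * Real.pi)

/-- `M̂(z₁,z₂)_{ab} = D ⟨M(z₁) E_a M(z₂) E_b⟩`. -/
def Mhat (D N : ℕ) (L : Matrix (Fin D × Fin N) (Fin D × Fin N) ℂ) (m : ℂ → ℂ) (z₁ z₂ : ℂ) :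
    Matrix (Fin D) (Fin D) ℂ :=
  Matrix.of fun a b =>
    (D : ℂ) * ntrace (Mdet L m z₁ * blockProj D N a * Mdet L m z₂ * blockProj D N b)

/-- `L(z₁,z₂)_{ab} = D ⟨G(z₁) E_a G(z₂) E_b⟩`. -/
def Lmat (D N : ℕ) (B : Matrix (Fin D × Fin N) (Fin D × Fin N) ℂ) (z₁ z₂ : ℂ) :
    Matrix (Fin D) (Fin D) ℂ :=
  Matrix.of fun a b =>
    (D : ℂ) * ntrace (resolv B z₁ * blockProj D N a * resolv B z₂ * blockProj D N b)

/-- `K(z₁,z₂) = (1 - M̂(z₁,z₂))⁻¹ M̂(z₁,z₂)`. -/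
def Kmat (D N : ℕ) (L : Matrix (Fin D × Fin N) (Fin D × Fin N) ℂ) (m : ℂ → ℂ) (z₁ z₂ : ℂ) :
    Matrix (Fin D) (Fin D) ℂ :=
  (1 - Mhat D N L m z₁ z₂)⁻¹ * Mhat D N L m z₁ z₂

/-- `L(z₁,z₂,z₃)_{a₁a₂a₃} = D ⟨G(z₁) E_{a₁} G(z₂) E_{a₂} G(z₃) E_{a₃}⟩`. -/
def Lmat3 (D N : ℕ) (B : Matrix (Fin D × Fin N) (Fin D × Fin N) ℂ) (z₁ z₂ z₃ : ℂ) :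
    Fin D → Fin D → Fin D → ℂ :=
  fun a b c => (D : ℂ) * ntrace (resolv B z₁ * blockProj D N a * resolv B z₂ *
    blockProj D N b * resolv B z₃ * blockProj D N c)

/-- The three-resolv deterministic tensor `K(z₁,z₂,z₃)`. -/
def Kmat3 (D N : ℕ) (L : Matrix (Fin D × Fin N) (Fin D × Fin N) ℂ) (m : ℂ → ℂ) (z₁ z₂ z₃ : ℂ) :
    Fin D → Fin D → Fin D → ℂ :=
  fun a b c => ∑ b₁, ∑ b₂, ∑ b₃,
    (1 - Mhat D N L m z₁ z₂)⁻¹ a b₁ * (1 - Mhat D N L m z₂ z₃)⁻¹ b b₂ *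
      (1 - Mhat D N L m z₃ z₁)⁻¹ c b₃ *
      ((D : ℂ) * ntrace (Mdet L m z₁ * blockProj D N b₁ * Mdet L m z₂ * blockProj D N b₂ *
        Mdet L m z₃ * blockProj D N b₃))
/-! Write `w = z + m(z)` and `M = M(z) = (Λ - w)⁻¹`. Since `Λ` is Hermitian, `M(z̄) = M*`, so
`M̂(z, z̄)_{ab} = D⟨X X*⟩` with `X = E_b M E_a` is nonnegative, and `M̂(z̄, z)` is its transpose.
By the Ward identity `M* M = M M* = (M - M*) / (w - w̄)`, the row and column sums of `M̂(z, z̄)`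
are `D Im⟨E_a M⟩ / Im w`. Every block carries the same share `⟨M⟩ / D = m / D` of the trace
(for `D ≥ 3` by the cyclic symmetry of `Λ`), so all these sums equal
`λ = Im m / (Im m + η) < 1`. A nonnegative matrix whose row and column sums all equal `λ` has
`ℓ²` operator norm at most `λ` (Schur test) and the constant vector as a `λ`-eigenvector; this
gives the spectral bound and `‖(1 - M̂)⁻¹‖ = (1 - λ)⁻¹`, attained at the constant vector. -/

section VecNorm

variable {ι : Type*} [Fintype ι]

lemma vecNorm_eq_norm_toLp (x : ι → ℂ) :
    vecNorm x = ‖(WithLp.toLp 2 x : EuclideanSpace ℂ ι)‖ := by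
  rw [vecNorm, EuclideanSpace.norm_eq]

lemma vecNorm_add_le (x y : ι → ℂ) : vecNorm (x + y) ≤ vecNorm x + vecNorm y := by
  simpa only [vecNorm_eq_norm_toLp, WithLp.toLp_add] using norm_add_le _ _

lemma vecNorm_smul (c : ℂ) (x : ι → ℂ) : vecNorm (c • x) = ‖c‖ * vecNorm x := by
  simp only [vecNorm_eq_norm_toLp, WithLp.toLp_smul, norm_smul]

lemma vecNorm_pos {x : ι → ℂ} (hx : x ≠ 0) : 0 < vecNorm x := by
  rw [vecNorm_eq_norm_toLp, norm_pos_iff]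
  simpa using hx

/-- Schur test. -/
lemma vecNorm_mulVec_le_of_sum_norm_le {B : Matrix ι ι ℂ} {r : ℝ} (hr : 0 ≤ r)
    (hrow : ∀ a, ∑ b, ‖B a b‖ ≤ r) (hcol : ∀ b, ∑ a, ‖B a b‖ ≤ r) (v : ι → ℂ) :
    vecNorm (B *ᵥ v) ≤ r * vecNorm v := by
  have hentry : ∀ a, ‖(B *ᵥ v) a‖ ^ 2 ≤ r * ∑ b, ‖B a b‖ * ‖v b‖ ^ 2 := fun a => by
    have hcs :
        (∑ b, ‖B a b‖ * ‖v b‖) ^ 2 ≤ (∑ b, ‖B a b‖) * ∑ b, ‖B a b‖ * ‖v b‖ ^ 2 :=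
      Finset.sum_sq_le_sum_mul_sum_of_sq_le_mul _ (fun b _ => norm_nonneg _)
        (fun b _ => by positivity)
        (fun b _ => (by ring : (‖B a b‖ * ‖v b‖) ^ 2 = _).le)
    calc ‖(B *ᵥ v) a‖ ^ 2 ≤ (∑ b, ‖B a b‖ * ‖v b‖) ^ 2 := by
          gcongr
          simpa only [mulVec, dotProduct, norm_mul] using
            norm_sum_le Finset.univ fun b => B a b * v b
      _ ≤ r * ∑ b, ‖B a b‖ * ‖v b‖ ^ 2 :=
          hcs.trans (mul_le_mul_of_nonneg_right (hrow a) (by positivity))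
  have hsum : ∑ a, ‖(B *ᵥ v) a‖ ^ 2 ≤ r ^ 2 * ∑ b, ‖v b‖ ^ 2 :=
    calc ∑ a, ‖(B *ᵥ v) a‖ ^ 2 ≤ ∑ a, r * ∑ b, ‖B a b‖ * ‖v b‖ ^ 2 :=
          Finset.sum_le_sum fun a _ => hentry a
      _ = r * ∑ b, (∑ a, ‖B a b‖) * ‖v b‖ ^ 2 := by
          rw [← Finset.mul_sum, Finset.sum_comm]; simp only [Finset.sum_mul]
      _ ≤ r * ∑ b, r * ‖v b‖ ^ 2 := by gcongr with b; exact hcol b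
      _ = r ^ 2 * ∑ b, ‖v b‖ ^ 2 := by rw [← Finset.mul_sum]; ring
  rw [vecNorm, vecNorm, ← Real.sqrt_sq hr, ← Real.sqrt_mul (sq_nonneg r)]
  exact Real.sqrt_le_sqrt hsum

lemma opNorm_eq_of_le_of_eq {B : Matrix ι ι ℂ} {c : ℝ}
    (hle : ∀ x, vecNorm (B *ᵥ x) ≤ c * vecNorm x) {x₀ : ι → ℂ} (hx₀ : x₀ ≠ 0)
    (heq : vecNorm (B *ᵥ x₀) = c * vecNorm x₀) : opNorm B = c := by
  have hx₀pos := vecNorm_pos hx₀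
  have hc : 0 ≤ c := nonneg_of_mul_nonneg_left (heq ▸ Real.sqrt_nonneg _) hx₀pos
  have hbound : ∀ x : {x : ι → ℂ // vecNorm x ≤ 1}, vecNorm (B *ᵥ x.1) ≤ c := fun x =>
    (hle x.1).trans (mul_le_of_le_one_right hc x.2)
  set u : ι → ℂ := ((vecNorm x₀)⁻¹ : ℂ) • x₀
  have hu : vecNorm u = 1 := by
    rw [vecNorm_smul, norm_inv, Complex.norm_real, Real.norm_of_nonneg hx₀pos.le,
      inv_mul_cancel₀ hx₀pos.ne']
  have hBu : vecNorm (B *ᵥ u) = c := by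
    rw [Matrix.mulVec_smul, vecNorm_smul, heq, norm_inv, Complex.norm_real,
      Real.norm_of_nonneg hx₀pos.le]
    field_simp
  have : Nonempty {x : ι → ℂ // vecNorm x ≤ 1} := ⟨⟨u, hu.le⟩⟩
  refine le_antisymm (ciSup_le hbound) ?_
  rw [← hBu]
  exact le_ciSup (f := fun x : {x : ι → ℂ // vecNorm x ≤ 1} => vecNorm (B *ᵥ x.1))
    ⟨c, Set.forall_mem_range.mpr hbound⟩ ⟨u, hu.le⟩

end VecNorm

section OpNorm

variable {ι : Type*} [Fintype ι] [DecidableEq ι]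

lemma exists_mulVec_eq_smul_of_mem_spectrum {B : Matrix ι ι ℂ} {μ : ℂ}
    (hμ : μ ∈ spectrum ℂ B) : ∃ v ≠ 0, B *ᵥ v = μ • v := by
  rw [spectrum.mem_iff, Matrix.isUnit_iff_isUnit_det, isUnit_iff_ne_zero, not_not,
    ← Matrix.exists_mulVec_eq_zero_iff] at hμ
  obtain ⟨v, hv, hμv⟩ := hμ
  refine ⟨v, hv, ?_⟩
  rw [Algebra.algebraMap_eq_smul_one, Matrix.sub_mulVec, Matrix.smul_mulVec,
    Matrix.one_mulVec, sub_eq_zero] at hμv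
  exact hμv.symm

lemma norm_le_of_mem_spectrum {B : Matrix ι ι ℂ} {r : ℝ}
    (hB : ∀ v, vecNorm (B *ᵥ v) ≤ r * vecNorm v) {μ : ℂ} (hμ : μ ∈ spectrum ℂ B) :
    ‖μ‖ ≤ r := by
  obtain ⟨v, hv, hμv⟩ := exists_mulVec_eq_smul_of_mem_spectrum hμ
  have := hB v
  rw [hμv, vecNorm_smul] at this
  exact le_of_mul_le_mul_right this (vecNorm_pos hv)

lemma opNorm_inv_one_sub_eq [Nonempty ι] {B : Matrix ι ι ℂ} {r : ℝ} (hr : r < 1)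
    (hB : ∀ v, vecNorm (B *ᵥ v) ≤ r * vecNorm v)
    (hone : B *ᵥ (fun _ => 1) = (r : ℂ) • fun _ => 1) :
    opNorm (1 - B)⁻¹ = (1 - r)⁻¹ := by
  have hbelow : ∀ v, (1 - r) * vecNorm v ≤ vecNorm ((1 - B) *ᵥ v) := fun v => by
    have hsplit : (1 - B) *ᵥ v + B *ᵥ v = v := by
      rw [Matrix.sub_mulVec, Matrix.one_mulVec, sub_add_cancel]
    linarith [hB v, hsplit ▸ vecNorm_add_le ((1 - B) *ᵥ v) (B *ᵥ v)]
  have hunit : IsUnit (1 - B) := by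
    rw [Matrix.isUnit_iff_isUnit_det, isUnit_iff_ne_zero]
    intro hdet
    obtain ⟨v, hv, hv0⟩ := Matrix.exists_mulVec_eq_zero_iff.mpr hdet
    have := hbelow v
    rw [hv0, show vecNorm (0 : ι → ℂ) = 0 by simp [vecNorm]] at this
    nlinarith [vecNorm_pos hv]
  refine opNorm_eq_of_le_of_eq (x₀ := fun _ => 1) (fun x => ?_) (Function.ne_iff.mpr ?_) ?_
  · have := hbelow ((1 - B)⁻¹ *ᵥ x)
    rw [Matrix.mulVec_mulVec,
      Matrix.mul_nonsing_inv _ ((1 - B).isUnit_iff_isUnit_det.mp hunit),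
      Matrix.one_mulVec] at this
    rw [inv_mul_eq_div, le_div_iff₀' (by linarith)]
    exact this
  · exact ⟨Classical.arbitrary ι, one_ne_zero⟩
  · have hone' : (1 - B) *ᵥ (fun _ => 1) = ((1 - r : ℝ) : ℂ) • fun _ => 1 := by
      rw [Matrix.sub_mulVec, Matrix.one_mulVec, hone]
      ext; simp
    have hinv : (1 - B)⁻¹ *ᵥ (fun _ => 1) = (((1 - r)⁻¹ : ℝ) : ℂ) • fun _ => 1 := by
      have h := congrArg ((1 - B)⁻¹ *ᵥ ·) hone'
      simp only [Matrix.mulVec_mulVec, Matrix.mulVec_smul,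
        Matrix.nonsing_inv_mul _ ((1 - B).isUnit_iff_isUnit_det.mp hunit),
        Matrix.one_mulVec] at h
      rw [Complex.ofReal_inv, eq_inv_smul_iff₀ (by exact_mod_cast (by linarith : 1 - r ≠ 0))]
      exact h.symm
    rw [hinv, vecNorm_smul, Complex.norm_real,
      Real.norm_of_nonneg (inv_nonneg.mpr (by linarith))]

end OpNorm

section Nonneg

open scoped ComplexOrder

variable {ι : Type*} [Fintype ι] {B : Matrix ι ι ℂ} {r : ℝ}

lemma mulVec_const_one_of_sum_eq (hrow : ∀ a, ∑ b, B a b = r) :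
    B *ᵥ (fun _ => 1) = (r : ℂ) • fun _ => 1 := by
  ext a
  simp [mulVec, dotProduct, hrow]

lemma vecNorm_mulVec_le_of_nonneg [Nonempty ι] (hB : ∀ a b, 0 ≤ B a b)
    (hrow : ∀ a, ∑ b, B a b = r) (hcol : ∀ b, ∑ a, B a b = r) (v : ι → ℂ) :
    vecNorm (B *ᵥ v) ≤ r * vecNorm v := by
  have hnorm : ∀ a b, (‖B a b‖ : ℂ) = B a b := fun a b =>
    Complex.norm_of_nonneg' (hB a b)
  have hrow' : ∀ a, ∑ b, ‖B a b‖ = r := fun a =>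
    Complex.ofReal_injective (by push_cast; simp [hnorm, hrow])
  have hcol' : ∀ b, ∑ a, ‖B a b‖ = r := fun b =>
    Complex.ofReal_injective (by push_cast; simp [hnorm, hcol])
  have hr : 0 ≤ r :=
    hrow' (Classical.arbitrary ι) ▸ Finset.sum_nonneg fun b _ => norm_nonneg _
  exact vecNorm_mulVec_le_of_sum_norm_le hr (fun a => (hrow' a).le) (fun b => (hcol' b).le) v

end Nonneg

section Resolvent

variable {ι : Type*} [Fintype ι] [DecidableEq ι]

lemma inv_sub_smul_one_sub_inv {K : Type*} [Field K] {L : Matrix ι ι K} {w w' : K}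
    (hw : IsUnit (L - w • 1)) (hw' : IsUnit (L - w' • 1)) :
    (L - w • 1)⁻¹ - (L - w' • 1)⁻¹
      = (w - w') • ((L - w' • 1)⁻¹ * (L - w • 1)⁻¹) := by
  have hdet := (L - w • 1).isUnit_iff_isUnit_det.mp hw
  have hdet' := (L - w' • 1).isUnit_iff_isUnit_det.mp hw'
  calc (L - w • 1)⁻¹ - (L - w' • 1)⁻¹
      = (L - w' • 1)⁻¹ * ((L - w' • 1) - (L - w • 1)) * (L - w • 1)⁻¹ := by
        rw [Matrix.mul_sub, Matrix.sub_mul, Matrix.nonsing_inv_mul _ hdet', Matrix.one_mul,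
          Matrix.mul_assoc, Matrix.mul_nonsing_inv _ hdet, Matrix.mul_one]
    _ = (w - w') • ((L - w' • 1)⁻¹ * (L - w • 1)⁻¹) := by
        rw [sub_sub_sub_cancel_left, ← sub_smul, Matrix.mul_smul, Matrix.mul_one,
          Matrix.smul_mul]

lemma trace_mul_inv_sub_smul_one_eq_zero_of_anticomm {K : Type*} [Field K] [CharZero K]
    {J L : Matrix ι ι K} (hJL : J * L = -(L * J)) (hJ : J.trace = 0) {w : K} (hw : w ≠ 0)
    (hU : IsUnit (L - w • 1)) : (J * (L - w • 1)⁻¹).trace = 0 := by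
  set G := (L - w • 1)⁻¹
  have hdet := (L - w • 1).isUnit_iff_isUnit_det.mp hU
  have hLG : L * G = 1 + w • G := by
    have h := Matrix.mul_nonsing_inv _ hdet
    rwa [Matrix.sub_mul, Matrix.smul_mul, Matrix.one_mul, sub_eq_iff_eq_add] at h
  have hGL : G * L = 1 + w • G := by
    have h := Matrix.nonsing_inv_mul _ hdet
    rwa [Matrix.mul_sub, Matrix.mul_smul, Matrix.mul_one, sub_eq_iff_eq_add] at h
  have hJLG : (J * L * G).trace = 0 := by
    refine self_eq_neg.mp ?_
    calc (J * L * G).trace = (G * (J * L)).trace := trace_mul_comm _ _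
      _ = -(G * L * J).trace := by rw [hJL, Matrix.mul_neg, trace_neg, Matrix.mul_assoc]
      _ = -(J * L * G).trace := by
        rw [hGL, ← hLG, trace_mul_comm (L * G) J, Matrix.mul_assoc]
  rw [Matrix.mul_assoc, hLG, Matrix.mul_add, Matrix.mul_one, trace_add, hJ, zero_add,
    Matrix.mul_smul, trace_smul, smul_eq_mul] at hJLG
  exact (mul_eq_zero.mp hJLG).resolve_left hw

variable {L : Matrix ι ι ℂ}

lemma isUnit_sub_smul_one_of_im_ne_zero (hL : L.IsHermitian) {w : ℂ} (hw : w.im ≠ 0) :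
    IsUnit (L - w • 1) := by
  have hws : w ∉ spectrum ℂ L := by
    rw [hL.spectrum_eq_image_range]
    rintro ⟨r, -, rfl⟩
    exact hw (Complex.ofReal_im r)
  simpa [Algebra.algebraMap_eq_smul_one] using (spectrum.notMem_iff.mp hws).neg

lemma conjTranspose_inv_sub_smul_one (hL : L.IsHermitian) (w : ℂ) :
    ((L - w • 1)⁻¹)ᴴ = (L - star w • 1)⁻¹ := by
  rw [Matrix.conjTranspose_nonsing_inv, Matrix.conjTranspose_sub, hL.eq,
    Matrix.conjTranspose_smul, Matrix.conjTranspose_one]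

/-- Ward identity. -/
lemma conjTranspose_inv_mul_inv_sub_smul_one (hL : L.IsHermitian) {w : ℂ} (hw : w.im ≠ 0) :
    ((L - w • 1)⁻¹)ᴴ * (L - w • 1)⁻¹
      = (w - star w)⁻¹ • ((L - w • 1)⁻¹ - ((L - w • 1)⁻¹)ᴴ) := by
  have hw' : (star w).im ≠ 0 := by simpa using hw
  have hne : w - star w ≠ 0 := by
    rw [Complex.star_def, Complex.sub_conj]
    exact mul_ne_zero (by exact_mod_cast mul_ne_zero two_ne_zero hw) Complex.I_ne_zero
  rw [conjTranspose_inv_sub_smul_one hL, inv_sub_smul_one_sub_inv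
    (isUnit_sub_smul_one_of_im_ne_zero hL hw) (isUnit_sub_smul_one_of_im_ne_zero hL hw'),
    inv_smul_smul₀ hne]

lemma inv_mul_conjTranspose_inv_sub_smul_one (hL : L.IsHermitian) {w : ℂ} (hw : w.im ≠ 0) :
    (L - w • 1)⁻¹ * ((L - w • 1)⁻¹)ᴴ
      = (w - star w)⁻¹ • ((L - w • 1)⁻¹ - ((L - w • 1)⁻¹)ᴴ) := by
  have h := conjTranspose_inv_mul_inv_sub_smul_one hL (w := star w) (by simpa using hw)
  rw [← conjTranspose_inv_sub_smul_one hL, conjTranspose_conjTranspose, star_star] at h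
  rw [h, ← neg_sub w, inv_neg, neg_smul, ← smul_neg, neg_sub]

lemma inv_sub_star_mul_sub_star (w t : ℂ) :
    (w - star w)⁻¹ * (t - star t) = ((t.im / w.im : ℝ) : ℂ) := by
  rw [Complex.star_def, Complex.sub_conj, Complex.sub_conj]
  rcases eq_or_ne w.im 0 with hw | hw
  · simp [hw]
  · push_cast
    field_simp

end Resolvent

section NormalizedTrace

variable {ι : Type*} [Fintype ι]

lemma ntrace_mul_comm (X Y : Matrix ι ι ℂ) : ntrace (X * Y) = ntrace (Y * X) := by
  rw [ntrace, ntrace, trace_mul_comm]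

lemma ntrace_conjTranspose (X : Matrix ι ι ℂ) : ntrace Xᴴ = star (ntrace X) := by
  simp [ntrace, trace_conjTranspose]

lemma ntrace_sub (X Y : Matrix ι ι ℂ) : ntrace (X - Y) = ntrace X - ntrace Y := by
  rw [ntrace, ntrace, ntrace, trace_sub, mul_sub]

lemma ntrace_smul (c : ℂ) (X : Matrix ι ι ℂ) : ntrace (c • X) = c * ntrace X := by
  rw [ntrace, ntrace, trace_smul, smul_eq_mul, mul_left_comm]

lemma ntrace_sum {κ : Type*} (s : Finset κ) (X : κ → Matrix ι ι ℂ) :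
    ntrace (∑ k ∈ s, X k) = ∑ k ∈ s, ntrace (X k) := by
  simp only [ntrace, trace_sum, Finset.mul_sum]

end NormalizedTrace

section Blocks

variable {D N : ℕ}

lemma blockProj_eq_diagonal (a : Fin D) :
    blockProj D N a = diagonal fun p => if p.1 = a then 1 else 0 := by
  ext p q
  by_cases h : p = q
  · subst h; simp [blockProj]
  · simp [blockProj, h]

lemma blockProj_conjTranspose (a : Fin D) : (blockProj D N a)ᴴ = blockProj D N a := by
  rw [blockProj_eq_diagonal, diagonal_conjTranspose]
  congr 1; ext p; split_ifs <;> simp_all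

lemma blockProj_mul_self (a : Fin D) : blockProj D N a * blockProj D N a = blockProj D N a := by
  rw [blockProj_eq_diagonal, diagonal_mul_diagonal]
  congr 1; ext p; split_ifs <;> simp_all

lemma sum_blockProj : ∑ a : Fin D, blockProj D N a = 1 := by
  ext p q
  simp only [blockProj_eq_diagonal, Matrix.sum_apply, diagonal_apply, Matrix.one_apply]
  split_ifs <;> simp

lemma trace_blockProj_mul (a : Fin D) (X : Matrix (Fin D × Fin N) (Fin D × Fin N) ℂ) :
    (blockProj D N a * X).trace = ∑ i, X (a, i) (a, i) := by
  rw [blockProj_eq_diagonal, trace, Fintype.sum_prod_type, Finset.sum_eq_single a]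
  · simp
  · intro b _ hb; simp [hb]
  · simp

end Blocks

section Coupling

variable {D N : ℕ} (A : Matrix (Fin N) (Fin N) ℂ)

lemma coupling_isHermitian : (coupling D N A).IsHermitian := by
  ext ⟨a, i⟩ ⟨b, j⟩
  have ha := a.isLt
  have hb := b.isLt
  simp only [conjTranspose_apply, coupling, of_apply]
  split_ifs <;> first | (exfalso; omega) | simp

lemma coupling_submatrix_finRotate (hD : 2 < D) :
    (coupling D N A).submatrix ((finRotate D).prodCongr (Equiv.refl _))
      ((finRotate D).prodCongr (Equiv.refl _)) = coupling D N A := by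
  obtain ⟨D, rfl⟩ : ∃ D', D = D' + 1 := ⟨D - 1, by omega⟩
  ext ⟨a, i⟩ ⟨b, j⟩
  have ha := a.isLt
  have hb := b.isLt
  simp only [submatrix_apply, Equiv.prodCongr_apply, Prod.map, Equiv.refl_apply, coupling,
    of_apply, coe_finRotate, Fin.ext_iff, Fin.val_last]
  split_ifs <;> first | rfl | omega | simp_all

lemma coupling_two_anticomm :
    (blockProj 2 N 0 - blockProj 2 N 1) * coupling 2 N A
      = -(coupling 2 N A * (blockProj 2 N 0 - blockProj 2 N 1)) := by
  ext ⟨a, i⟩ ⟨b, j⟩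
  fin_cases a <;> fin_cases b <;> simp [blockProj_eq_diagonal, coupling]

end Coupling

lemma Fin.apply_eq_of_apply_finRotate_eq {n : ℕ} {α : Type*} {f : Fin n → α}
    (h : ∀ i, f (finRotate n i) = f i) (i j : Fin n) : f i = f j := by
  cases n with
  | zero => exact i.elim0
  | succ n =>
    have hzero : ∀ i, f i = f 0 := Fin.induction rfl fun i ih => by
      rw [← Fin.coeSucc_eq_succ, ← finRotate_apply, h, ih]
    rw [hzero i, hzero j]

section BlockTrace

variable {D N : ℕ} (A : Matrix (Fin N) (Fin N) ℂ)

lemma trace_blockProj_mul_coupling_inv_eq (hD : 2 ≤ D) {w : ℂ} (hw : w.im ≠ 0)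
    (a b : Fin D) :
    (blockProj D N a * (coupling D N A - w • 1)⁻¹).trace
      = (blockProj D N b * (coupling D N A - w • 1)⁻¹).trace := by
  -- For `D = 2` the cyclic shift exchanges `A` and `A*`; instead `E₀ - E₁` anticommutes with `Λ`.
  rcases hD.lt_or_eq with hD | rfl
  · refine Fin.apply_eq_of_apply_finRotate_eq
      (f := fun c => (blockProj D N c * (coupling D N A - w • 1)⁻¹).trace) (fun c => ?_) a b
    set e := (finRotate D).prodCongr (Equiv.refl (Fin N))
    have hL : (coupling D N A - w • 1).submatrix e e = coupling D N A - w • 1 := by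
      change (coupling D N A).submatrix e e - w • (1 : Matrix _ _ ℂ).submatrix e e = _
      rw [coupling_submatrix_finRotate A hD, submatrix_one_equiv]
    have hG :
        ((coupling D N A - w • 1)⁻¹).submatrix e e = (coupling D N A - w • 1)⁻¹ := by
      rw [← Matrix.inv_submatrix_equiv, hL]
    simp only [trace_blockProj_mul]
    conv_rhs => rw [← hG]
    rfl
  · have hJ : (blockProj 2 N 0 - blockProj 2 N 1).trace = 0 := by
      rw [trace_sub, ← Matrix.mul_one (blockProj 2 N 0), ← Matrix.mul_one (blockProj 2 N 1),
        trace_blockProj_mul, trace_blockProj_mul]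
      simp
    have hw0 : w ≠ 0 := by rintro rfl; exact hw rfl
    have h := trace_mul_inv_sub_smul_one_eq_zero_of_anticomm (coupling_two_anticomm A) hJ hw0
      (isUnit_sub_smul_one_of_im_ne_zero (coupling_isHermitian A) hw)
    rw [Matrix.sub_mul, trace_sub, sub_eq_zero] at h
    fin_cases a <;> fin_cases b <;> simp [h]

lemma mul_ntrace_blockProj_mul_coupling_inv (hD : 2 ≤ D) {w : ℂ} (hw : w.im ≠ 0)
    (a : Fin D) :
    (D : ℂ) * ntrace (blockProj D N a * (coupling D N A - w • 1)⁻¹)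
      = ntrace (coupling D N A - w • 1)⁻¹ := by
  have hsum : ((coupling D N A - w • 1)⁻¹).trace
      = D * (blockProj D N a * (coupling D N A - w • 1)⁻¹).trace := by
    have hsplit : ∀ X : Matrix (Fin D × Fin N) (Fin D × Fin N) ℂ,
        X.trace = ∑ b, (blockProj D N b * X).trace := fun X => by
      rw [← trace_sum, ← Finset.sum_mul, sum_blockProj, Matrix.one_mul]
    rw [hsplit,
      Finset.sum_congr rfl fun b _ => trace_blockProj_mul_coupling_inv_eq A hD hw b a]
    simp
  rw [ntrace, ntrace, hsum]
  ring

end BlockTrace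

section Mhat

variable {D N : ℕ} {L : Matrix (Fin D × Fin N) (Fin D × Fin N) ℂ} {m : ℂ → ℂ}

lemma Mdet_eq_inv (z : ℂ) :
    Mdet L m z = (L - (z + m z) • 1)⁻¹ := by
  rw [Mdet, sub_sub, ← add_smul]

lemma Mdet_conj (hL : L.IsHermitian) (hm : ∀ z, m (starRingEnd ℂ z) = starRingEnd ℂ (m z))
    (z : ℂ) : Mdet L m (starRingEnd ℂ z) = (Mdet L m z)ᴴ := by
  rw [Mdet_eq_inv, Mdet_eq_inv, conjTranspose_inv_sub_smul_one hL, hm, ← map_add]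
  rfl

lemma Mhat_transpose (z₁ z₂ : ℂ) : (Mhat D N L m z₁ z₂)ᵀ = Mhat D N L m z₂ z₁ := by
  ext a b
  simp only [transpose_apply, Mhat, of_apply]
  rw [Matrix.mul_assoc _ (Mdet L m z₂), ntrace_mul_comm, ← Matrix.mul_assoc]

end Mhat

section MhatConj

open scoped ComplexOrder

variable {D N : ℕ} {L : Matrix (Fin D × Fin N) (Fin D × Fin N) ℂ} {m : ℂ → ℂ}
  (hL : L.IsHermitian) (hm : ∀ z, m (starRingEnd ℂ z) = starRingEnd ℂ (m z)) (z : ℂ)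
include hL hm

lemma Mhat_conj_nonneg (a b : Fin D) : 0 ≤ Mhat D N L m z (starRingEnd ℂ z) a b := by
  set M := Mdet L m z
  set X := blockProj D N b * M * blockProj D N a
  have hX : ntrace (M * blockProj D N a * Mᴴ * blockProj D N b) = ntrace (X * Xᴴ) := by
    simp only [X, conjTranspose_mul, blockProj_conjTranspose, Matrix.mul_assoc]
    rw [← Matrix.mul_assoc (blockProj D N a) (blockProj D N a), blockProj_mul_self,
      ntrace_mul_comm (blockProj D N b), Matrix.mul_assoc, Matrix.mul_assoc, Matrix.mul_assoc,
      blockProj_mul_self]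
  rw [Mhat, of_apply, Mdet_conj hL hm, hX, ntrace]
  exact mul_nonneg (Nat.cast_nonneg _) (mul_nonneg (inv_nonneg.mpr (Nat.cast_nonneg _))
    (posSemidef_self_mul_conjTranspose X).trace_nonneg)

lemma sum_Mhat_conj_right (a : Fin D) :
    ∑ b, Mhat D N L m z (starRingEnd ℂ z) a b
      = D * ntrace (blockProj D N a * ((Mdet L m z)ᴴ * Mdet L m z)) := by
  simp only [Mhat, of_apply, Mdet_conj hL hm, ← Finset.mul_sum, ← ntrace_sum, sum_blockProj,
    Matrix.mul_one]
  rw [Matrix.mul_assoc, ntrace_mul_comm, Matrix.mul_assoc]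

lemma sum_Mhat_conj_left (b : Fin D) :
    ∑ a, Mhat D N L m z (starRingEnd ℂ z) a b
      = D * ntrace (blockProj D N b * (Mdet L m z * (Mdet L m z)ᴴ)) := by
  simp only [Mhat, of_apply, Mdet_conj hL hm]
  generalize Mdet L m z = M
  have hcycle : ∀ a, ntrace (M * blockProj D N a * Mᴴ * blockProj D N b)
      = ntrace (blockProj D N a * (Mᴴ * blockProj D N b * M)) := fun a => by
    rw [Matrix.mul_assoc M, Matrix.mul_assoc M, ntrace_mul_comm, Matrix.mul_assoc,
      Matrix.mul_assoc, Matrix.mul_assoc]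
  rw [← Finset.mul_sum, Finset.sum_congr rfl fun a _ => hcycle a, ← ntrace_sum, ← Finset.sum_mul,
    sum_blockProj, Matrix.one_mul, Matrix.mul_assoc, ntrace_mul_comm, Matrix.mul_assoc]

end MhatConj

lemma mul_ntrace_blockProj_mul_conjTranspose_mul_Mdet {D N : ℕ} (hD : 2 ≤ D)
    {A : Matrix (Fin N) (Fin N) ℂ} {m : ℂ → ℂ} (hm : IsSelfConsistent (coupling D N A) m)
    {z : ℂ} (hz : 0 < z.im) (a : Fin D) :
    (D : ℂ) * ntrace (blockProj D N a *
        ((Mdet (coupling D N A) m z)ᴴ * Mdet (coupling D N A) m z))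
      = (((m z).im / ((m z).im + z.im) : ℝ) : ℂ) := by
  have hw : (z + m z).im ≠ 0 := by
    rw [Complex.add_im]; linarith [hm.im_pos z hz]
  set G := (coupling D N A - (z + m z) • 1)⁻¹
  have hblock : (D : ℂ) * ntrace (blockProj D N a * G) = m z := by
    rw [mul_ntrace_blockProj_mul_coupling_inv A hD hw, ← Mdet_eq_inv]
    exact (hm.eqn z hz).symm
  have hblock_star : (D : ℂ) * ntrace (blockProj D N a * Gᴴ) = star (m z) := by
    rw [← blockProj_conjTranspose (N := N) a, ← conjTranspose_mul, ntrace_conjTranspose,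
      ntrace_mul_comm, ← hblock, star_mul', star_natCast]
  rw [Mdet_eq_inv, conjTranspose_inv_mul_inv_sub_smul_one (coupling_isHermitian A) hw,
    Matrix.mul_smul, ntrace_smul, Matrix.mul_sub, ntrace_sub, mul_left_comm, mul_sub, hblock,
    hblock_star, inv_sub_star_mul_sub_star, Complex.add_im, add_comm z.im]

section Stability

open scoped ComplexOrder

variable {D N : ℕ} (hD : 2 ≤ D) {A : Matrix (Fin N) (Fin N) ℂ} {m : ℂ → ℂ}
  (hm : IsSelfConsistent (coupling D N A) m) {z : ℂ} (hz : 0 < z.im)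
include hD hm hz

lemma Mhat_conj_nonneg_and_sum_eq :
    (∀ a b, 0 ≤ Mhat D N (coupling D N A) m z (starRingEnd ℂ z) a b)
    ∧ (∀ a, ∑ b, Mhat D N (coupling D N A) m z (starRingEnd ℂ z) a b
        = (((m z).im / ((m z).im + z.im) : ℝ) : ℂ))
    ∧ (∀ b, ∑ a, Mhat D N (coupling D N A) m z (starRingEnd ℂ z) a b
        = (((m z).im / ((m z).im + z.im) : ℝ) : ℂ)) := by
  have hL := coupling_isHermitian (D := D) A
  have hw : (z + m z).im ≠ 0 := by rw [Complex.add_im]; linarith [hm.im_pos z hz]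
  refine ⟨Mhat_conj_nonneg hL hm.conj_symm z, fun a => ?_, fun b => ?_⟩
  · rw [sum_Mhat_conj_right hL hm.conj_symm,
      mul_ntrace_blockProj_mul_conjTranspose_mul_Mdet hD hm hz]
  · rw [sum_Mhat_conj_left hL hm.conj_symm, Mdet_eq_inv,
      inv_mul_conjTranspose_inv_sub_smul_one hL hw,
      ← conjTranspose_inv_mul_inv_sub_smul_one hL hw,
      ← Mdet_eq_inv, mul_ntrace_blockProj_mul_conjTranspose_mul_Mdet hD hm hz]

end Stability

theorem stability_operator_norm_general
    (D : ℕ) (hD : 2 ≤ D)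
    (N : ℕ) (A : Matrix (Fin N) (Fin N) ℂ)
    (m : ℂ → ℂ) (hm : IsSelfConsistent (coupling D N A) m)
    (z : ℂ) (hz2 : 0 < z.im)
    (z₁ z₂ : ℂ) (h12 : z₂ = starRingEnd ℂ z₁) (hzin : z₁ = z ∨ z₁ = starRingEnd ℂ z)
    (Mh : Matrix (Fin D) (Fin D) ℂ) (hMh : Mh = Mhat D N (coupling D N A) m z₁ z₂) :
    (∀ a b : Fin D, 0 ≤ (Mh a b).re ∧ (Mh a b).im = 0)
    ∧ Mh.mulVec (fun _ => (1 : ℂ)) = (((m z).im / ((m z).im + z.im) : ℝ) : ℂ) • (fun _ : Fin D => (1 : ℂ))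
    ∧ (∀ μc ∈ spectrum ℂ Mh, ‖μc‖ ≤ (m z).im / ((m z).im + z.im))
    ∧ opNorm ((1 - Mh)⁻¹) = ((m z).im + z.im) / z.im := by
  open scoped ComplexOrder in
  obtain ⟨hnonneg, hrow, hcol⟩ : (∀ a b, 0 ≤ Mh a b)
      ∧ (∀ a, ∑ b, Mh a b = (((m z).im / ((m z).im + z.im) : ℝ) : ℂ))
      ∧ (∀ b, ∑ a, Mh a b = (((m z).im / ((m z).im + z.im) : ℝ) : ℂ)) := by
    obtain ⟨hnonneg, hrow, hcol⟩ := Mhat_conj_nonneg_and_sum_eq hD hm hz2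
    subst hMh h12
    rcases hzin with rfl | rfl
    · exact ⟨hnonneg, hrow, hcol⟩
    · rw [Complex.conj_conj, ← Mhat_transpose]
      exact ⟨fun a b => hnonneg b a, hcol, hrow⟩
  have hs := hm.im_pos z hz2
  have : Nonempty (Fin D) := ⟨⟨0, by omega⟩⟩
  have hnorm := vecNorm_mulVec_le_of_nonneg hnonneg hrow hcol
  have hlt : (m z).im / ((m z).im + z.im) < 1 := (div_lt_one (by linarith)).mpr (by linarith)
  refine ⟨fun a b => ?_, mulVec_const_one_of_sum_eq hrow,
    fun μ hμ => norm_le_of_mem_spectrum hnorm hμ, ?_⟩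
  · obtain ⟨hre, him⟩ := Complex.nonneg_iff.mp (hnonneg a b)
    exact ⟨hre, him.symm⟩
  · rw [opNorm_inv_one_sub_eq hlt hnorm (mulVec_const_one_of_sum_eq hrow),
      one_sub_div (by linarith), add_sub_cancel_left, inv_div]

/-- **Lemma A.1(vii) (Exact norm formula for the two-body stability operator at conjugate
spectral parameters).** For `z₁ = conj z₂ ∈ {z, z̄}`, the matrix `M̂(z₁,z₂)` has nonnegative
entries, its Perron–Frobenius eigenvalue is `Im m(z)/(Im m(z)+η)` with eigenvector
`(1,…,1)ᵀ`, and `‖(1 - M̂(z₁,z₂))⁻¹‖ = (Im m(z)+η)/η`. -/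
theorem stability_operator_norm
    (D : ℕ) (hD : 2 ≤ D) (δA : ℝ) (hδA : 0 < δA) (τ : ℝ) (hτ : 0 < τ)
    (N : ℕ) (hN : 0 < N) (A : Matrix (Fin N) (Fin N) ℂ)
    (hA : ∀ x : Fin N → ℂ, vecNorm (A.mulVec x) ≤ (N : ℝ) ^ (-δA) * vecNorm x)
    (m : ℂ → ℂ) (hm : IsSelfConsistent (coupling D N A) m)
    (z : ℂ) (hz1 : ‖z‖ ≤ τ⁻¹) (hz2 : 0 < z.im)
    (z₁ z₂ : ℂ) (h12 : z₂ = starRingEnd ℂ z₁) (hzin : z₁ = z ∨ z₁ = starRingEnd ℂ z)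
    (Mh : Matrix (Fin D) (Fin D) ℂ) (hMh : Mh = Mhat D N (coupling D N A) m z₁ z₂) :
    (∀ a b : Fin D, 0 ≤ (Mh a b).re ∧ (Mh a b).im = 0)
    ∧ Mh.mulVec (fun _ => (1 : ℂ)) = (((m z).im / ((m z).im + z.im) : ℝ) : ℂ) • (fun _ : Fin D => (1 : ℂ))
    ∧ (∀ μc ∈ spectrum ℂ Mh, ‖μc‖ ≤ (m z).im / ((m z).im + z.im))
    ∧ opNorm ((1 - Mh)⁻¹) = ((m z).im + z.im) / z.im :=
  stability_operator_norm_general D hD N A m hm z hz2 z₁ z₂ h12 hzin Mh hMh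

end
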